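/- arXiv:2509.23106 — 2 statements merged into one kernel-verified Lean document; each statement's English description precedes it below -/
import Mathlib

section
/- (Theorem 3, Muon with exact polar orthogonalization is robust to linear quantization.) Let W ∈ ℝ^{m×n} be the layer weights, M ∈ ℝ^{m×n} a nonzero momentum matrix with d = m·n entries, G ∈ ℝ^{m×n} a gradient matrix, α > 0 a step size, β ∈ [0,1) the momentum parameter, and s > 0. Define the updated momenta M' = β·M + G and M̃' = β·Q_mat(M) + G, where Q_mat applies the 8-bit linear quantization operator Q to the vectorization of M. Suppose M' = O·P and M̃' = Õ·P̃ are polar factorizations, i.e. O, Õ ∈ ℝ^{m×n} satisfy Oᵀ·O = Iₙ and Õᵀ·Õ = Iₙ, and P, P̃ ∈ ℝ^{n×n} are symmetric positive semidefinite; suppose further that both M' and M̃' have full column rank with smallest singular value at least s. Define the updated weights W⁺ = W − α·O and W̃⁺ = W − α·Õ. Then ‖W̃⁺ − W⁺‖_F² ≤ (d·α²·β²/s²) · (‖vec(M)‖∞/127)², where ‖·‖_F is the Frobenius norm and ‖vec(M)‖∞ is the maximum absolute value of the entries of M. -/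
open Matrix

/-- 8-bit linear quantization of a finite-dimensional real vector: each
coordinate is scaled by `127 / ‖x‖∞`, rounded to the nearest integer, and
rescaled by `‖x‖∞ / 127`.  Here `‖x‖` is the sup norm (the norm on the
Pi type `ι → ℝ`). -/
noncomputable def Q8 {ι : Type*} [Fintype ι] (x : ι → ℝ) : ι → ℝ :=
  fun i => (‖x‖ / 127) * ((round (127 * x i / ‖x‖) : ℤ) : ℝ)

/-- 8-bit linear quantization of a matrix: apply `Q8` to its
vectorization and reshape. -/
noncomputable def Q8mat {m n : ℕ} (M : Matrix (Fin m) (Fin n) ℝ) :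
    Matrix (Fin m) (Fin n) ℝ :=
  Matrix.of fun i j => Q8 (fun p : Fin m × Fin n => M p.1 p.2) (i, j)

/- ### Auxiliary lemmas -/

lemma unitcol {n : ℕ} {P : Matrix (Fin n) (Fin n) ℝ} (hH : P.IsHermitian) (i : Fin n) :
    ∑ j, (hH.eigenvectorBasis i j) ^ 2 = 1 := by
  have h1 : ‖hH.eigenvectorBasis i‖ = 1 := hH.eigenvectorBasis.orthonormal.1 i
  rw [EuclideanSpace.norm_eq] at h1
  have h4 : (√(∑ j, ‖hH.eigenvectorBasis i j‖ ^ 2)) ^ 2 = 1 := by rw [h1]; norm_num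
  rw [Real.sq_sqrt (by positivity)] at h4
  simpa [Real.norm_eq_abs, sq_abs] using h4

lemma eig_ge {n : ℕ} {P : Matrix (Fin n) (Fin n) ℝ} (hP : P.PosSemidef)
    {s : ℝ} (hs : 0 < s)
    (h : ∀ v : Fin n → ℝ, s ^ 2 * ∑ j, (v j) ^ 2 ≤ ∑ i, (P.mulVec v i) ^ 2)
    (i : Fin n) : s ≤ hP.1.eigenvalues i := by
  have hH := hP.1
  have hnn : 0 ≤ hH.eigenvalues i := hP.eigenvalues_nonneg i
  have hmv : P *ᵥ (hH.eigenvectorBasis i : Fin n → ℝ)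
      = hH.eigenvalues i • (hH.eigenvectorBasis i : Fin n → ℝ) := hH.mulVec_eigenvectorBasis i
  have h2 := h (hH.eigenvectorBasis i)
  rw [hmv] at h2
  have hx : ∑ x, ((hH.eigenvalues i • (hH.eigenvectorBasis i : Fin n → ℝ)) x) ^ 2
      = hH.eigenvalues i ^ 2 := by
    simp only [Pi.smul_apply, smul_eq_mul, mul_pow, ← Finset.mul_sum]
    rw [unitcol hH i, mul_one]
  rw [hx, unitcol hH i, mul_one] at h2
  nlinarith

lemma psd_lower {n : ℕ} {P : Matrix (Fin n) (Fin n) ℝ} (hP : P.PosSemidef)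
    {s : ℝ} (hs : 0 < s)
    (h : ∀ v : Fin n → ℝ, s ^ 2 * ∑ j, (v j) ^ 2 ≤ ∑ i, (P.mulVec v i) ^ 2)
    (v : Fin n → ℝ) :
    s * ∑ j, (v j) ^ 2 ≤ v ⬝ᵥ P.mulVec v := by
  classical
  have hH := hP.1
  obtain ⟨lam, hlam⟩ : ∃ l, hH.eigenvalues = l := ⟨_, rfl⟩
  obtain ⟨U, hUdef⟩ : ∃ u, (hH.eigenvectorUnitary : Matrix (Fin n) (Fin n) ℝ) = u := ⟨_, rfl⟩
  have hU1 : star U * U = 1 := by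
    rw [← hUdef]; exact Matrix.mem_unitaryGroup_iff'.mp hH.eigenvectorUnitary.2
  have hU2 : U * star U = 1 := by
    rw [← hUdef]; exact Matrix.mem_unitaryGroup_iff.mp hH.eigenvectorUnitary.2
  have hlam_ge : ∀ i, s ≤ lam i := by
    intro i; rw [← hlam]; exact eig_ge hP hs h i
  have hspec : P = U * Matrix.diagonal (fun j => lam j) * star U := by
    rw [← hUdef, ← hlam]
    simpa [Function.comp] using hH.spectral_theorem
  set w : Fin n → ℝ := (star U).mulVec v with hw
  have key1 : v ⬝ᵥ P.mulVec v = ∑ i, lam i * (w i) ^ 2 := by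
    rw [hspec, ← Matrix.mulVec_mulVec, ← Matrix.mulVec_mulVec, Matrix.dotProduct_mulVec]
    have hvU : v ᵥ* U = w := by
      rw [hw]
      ext j
      simp [Matrix.vecMul, Matrix.mulVec, dotProduct, Matrix.star_apply, mul_comm]
    rw [hvU]
    simp only [dotProduct, Matrix.mulVec_diagonal]
    exact Finset.sum_congr rfl fun x _ => by ring
  have key2 : ∑ j, (v j) ^ 2 = ∑ j, (w j) ^ 2 := by
    have hv : U.mulVec w = v := by
      rw [hw, Matrix.mulVec_mulVec, hU2, Matrix.one_mulVec]
    calc ∑ j, (v j) ^ 2 = v ⬝ᵥ v := by simp [dotProduct, sq]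
      _ = v ⬝ᵥ U.mulVec w := by rw [hv]
      _ = (v ᵥ* U) ⬝ᵥ w := (Matrix.dotProduct_mulVec _ _ _)
      _ = w ⬝ᵥ w := by
          congr 1
          rw [hw]; ext j
          simp [Matrix.vecMul, Matrix.mulVec, dotProduct, Matrix.star_apply, mul_comm]
      _ = ∑ j, (w j) ^ 2 := by simp [dotProduct, sq]
  rw [key1, key2, Finset.mul_sum]
  apply Finset.sum_le_sum
  intro i _
  exact mul_le_mul_of_nonneg_right (hlam_ge i) (sq_nonneg _)

lemma trace_form {m n : ℕ} (A B : Matrix (Fin m) (Fin n) ℝ) :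
    Matrix.trace (Aᵀ * B) = ∑ i, ∑ j, A i j * B i j := by
  simp only [Matrix.trace, Matrix.diag, Matrix.mul_apply, Matrix.transpose_apply]
  rw [Finset.sum_comm]

lemma trace_sym {m n : ℕ} (O Ot : Matrix (Fin m) (Fin n) ℝ)
    (P : Matrix (Fin n) (Fin n) ℝ) (hPs : Pᵀ = P) :
    Matrix.trace (Oᵀ * Ot * P) = Matrix.trace (Otᵀ * O * P) := by
  have h1 : (Oᵀ * Ot * P)ᵀ = Pᵀ * (Otᵀ * O) := by
    simp [Matrix.transpose_mul, Matrix.mul_assoc]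
  calc Matrix.trace (Oᵀ * Ot * P) = Matrix.trace ((Oᵀ * Ot * P)ᵀ) :=
        (Matrix.trace_transpose _).symm
    _ = Matrix.trace (Pᵀ * (Otᵀ * O)) := by rw [h1]
    _ = Matrix.trace ((Otᵀ * O) * Pᵀ) := Matrix.trace_mul_comm _ _
    _ = Matrix.trace (Otᵀ * O * P) := by rw [hPs]

lemma trace_identity {m n : ℕ} (O Ot : Matrix (Fin m) (Fin n) ℝ)
    (P Pt : Matrix (Fin n) (Fin n) ℝ)
    (hO : Oᵀ * O = 1) (hOt : Otᵀ * Ot = 1) (hPs : Pᵀ = P) (hPts : Ptᵀ = Pt) :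
    Matrix.trace ((O - Ot)ᵀ * (O * P - Ot * Pt)) =
      (Matrix.trace ((O - Ot)ᵀ * (O - Ot) * P)
        + Matrix.trace ((O - Ot)ᵀ * (O - Ot) * Pt)) / 2 := by
  simp only [Matrix.transpose_sub, Matrix.sub_mul, Matrix.mul_sub, ← Matrix.mul_assoc,
    Matrix.trace_sub]
  rw [hO, hOt]
  simp only [Matrix.one_mul]
  linarith [trace_sym O Ot P hPs, trace_sym O Ot Pt hPts]

lemma trace_rows {m n : ℕ} (X : Matrix (Fin m) (Fin n) ℝ) (P : Matrix (Fin n) (Fin n) ℝ) :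
    Matrix.trace (Xᵀ * X * P) = ∑ i, (fun j => X i j) ⬝ᵥ P.mulVec (fun j => X i j) := by
  rw [Matrix.mul_assoc, trace_form]
  apply Finset.sum_congr rfl
  intro i _
  simp only [dotProduct, Matrix.mulVec, Matrix.mul_apply, Finset.mul_sum]
  rw [Finset.sum_comm]
  exact Finset.sum_congr rfl fun l _ => Finset.sum_congr rfl fun j _ => by ring

lemma trace_lower {m n : ℕ} (X : Matrix (Fin m) (Fin n) ℝ) (P : Matrix (Fin n) (Fin n) ℝ)
    {s : ℝ} (hlow : ∀ v : Fin n → ℝ, s * ∑ j, (v j) ^ 2 ≤ v ⬝ᵥ P.mulVec v) :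
    s * Matrix.trace (Xᵀ * X) ≤ Matrix.trace (Xᵀ * X * P) := by
  rw [trace_rows, trace_form, Finset.mul_sum]
  apply Finset.sum_le_sum
  intro i _
  have := hlow (fun j => X i j)
  simpa [sq] using this

lemma q8_close {ι : Type*} [Fintype ι] (x : ι → ℝ) (i : ι) :
    |Q8 x i - x i| ≤ ‖x‖ / 254 := by
  rcases eq_or_ne x 0 with rfl | hx
  · simp [Q8]
  · have hn : (0:ℝ) < ‖x‖ := norm_pos_iff.mpr hx
    set t : ℝ := 127 * x i / ‖x‖ with ht
    have hxi : (‖x‖ / 127) * t = x i := by rw [ht]; field_simp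
    have h1 : Q8 x i - x i = (‖x‖ / 127) * ((round t : ℤ) - t) := by
      rw [mul_sub, hxi]; rfl
    rw [h1, abs_mul]
    have h2 : |((round t : ℤ) : ℝ) - t| ≤ 1/2 := by
      rw [abs_sub_comm]; exact abs_sub_round t
    have h3 : |‖x‖ / 127| = ‖x‖ / 127 := abs_of_nonneg (by positivity)
    calc |‖x‖ / 127| * |((round t : ℤ) : ℝ) - t| ≤ ‖x‖ / 127 * (1/2) := by
          rw [h3]; exact mul_le_mul_of_nonneg_left h2 (by positivity)
      _ = ‖x‖ / 254 := by ring

lemma mulVec_norm {m n : ℕ} (O : Matrix (Fin m) (Fin n) ℝ) (hO : Oᵀ * O = 1)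
    (u : Fin n → ℝ) : ∑ i, (O.mulVec u i) ^ 2 = ∑ j, (u j) ^ 2 := by
  have h1 : ∑ i, (O.mulVec u i) ^ 2 = (O.mulVec u) ⬝ᵥ (O.mulVec u) := by
    simp [dotProduct, sq]
  rw [h1, Matrix.dotProduct_mulVec, ← Matrix.mulVec_transpose, Matrix.mulVec_mulVec, hO,
    Matrix.one_mulVec]
  simp [dotProduct, sq]

set_option maxHeartbeats 1600000 in
/-- **Theorem 3 (Muon with exact polar orthogonalization is robust to
linear quantization).**  Let `W ∈ ℝ^{m×n}` be the layer weights,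
`M ∈ ℝ^{m×n}` a nonzero momentum matrix with `d = m·n` entries, `G` a
gradient matrix, `α > 0`, `β ∈ [0,1)` and `s > 0`.  Let
`M' = β·M + G` and `M̃' = β·Q_mat(M) + G` with polar factorizations
`M' = O·P`, `M̃' = Õ·P̃` (where `Oᵀ·O = Iₙ`, `Õᵀ·Õ = Iₙ` and `P, P̃` are
symmetric positive semidefinite), and suppose both `M'` and `M̃'` have
full column rank with smallest singular value at least `s` (expressed as
`‖M'·v‖₂² ≥ s²·‖v‖₂²` for all `v`, and likewise for `M̃'`).  Then for the
updated weights `W⁺ = W − α·O` and `W̃⁺ = W − α·Õ` we have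
`‖W̃⁺ − W⁺‖_F² ≤ (d·α²·β²/s²)·(‖vec(M)‖∞/127)²`. -/
theorem muon_exact_polar_quant_error {m n : ℕ}
    (W M G O Ot : Matrix (Fin m) (Fin n) ℝ)
    (P Pt : Matrix (Fin n) (Fin n) ℝ)
    (hM : M ≠ 0) (α β s : ℝ) (hα : 0 < α) (hβ : β ∈ Set.Ico (0 : ℝ) 1)
    (hs : 0 < s)
    (M' Mt' : Matrix (Fin m) (Fin n) ℝ)
    (hM' : M' = β • M + G)
    (hMt' : Mt' = β • Q8mat M + G)
    (hfac : M' = O * P) (hO : Oᵀ * O = 1) (hP : P.PosSemidef)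
    (hfact : Mt' = Ot * Pt) (hOt : Otᵀ * Ot = 1) (hPt : Pt.PosSemidef)
    (hsing : ∀ v : Fin n → ℝ,
      s ^ 2 * ∑ j, (v j) ^ 2 ≤ ∑ i, (M'.mulVec v i) ^ 2)
    (hsingt : ∀ v : Fin n → ℝ,
      s ^ 2 * ∑ j, (v j) ^ 2 ≤ ∑ i, (Mt'.mulVec v i) ^ 2)
    (Wp Wtp : Matrix (Fin m) (Fin n) ℝ)
    (hWp : Wp = W - α • O) (hWtp : Wtp = W - α • Ot) :
    ∑ i, ∑ j, (Wtp i j - Wp i j) ^ 2 ≤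
      ((m * n : ℕ) : ℝ) * α ^ 2 * β ^ 2 / s ^ 2 *
        (‖fun p : Fin m × Fin n => M p.1 p.2‖ / 127) ^ 2 := by
  classical
  obtain ⟨x, hx⟩ : ∃ y : Fin m × Fin n → ℝ, (fun p : Fin m × Fin n => M p.1 p.2) = y := ⟨_, rfl⟩
  obtain ⟨X, hX⟩ : ∃ Y, O - Ot = Y := ⟨_, rfl⟩
  obtain ⟨E, hE⟩ : ∃ Y, M' - Mt' = Y := ⟨_, rfl⟩
  rw [hx]
  -- symmetry of P and Pt
  have hPs : Pᵀ = P := by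
    ext i j
    have := congrFun (congrFun hP.1 i) j
    simpa [Matrix.conjTranspose_apply] using this
  have hPts : Ptᵀ = Pt := by
    ext i j
    have := congrFun (congrFun hPt.1 i) j
    simpa [Matrix.conjTranspose_apply] using this
  -- lower bounds for the quadratic forms of P and Pt
  have hPlow : ∀ v : Fin n → ℝ, s * ∑ j, (v j) ^ 2 ≤ v ⬝ᵥ P.mulVec v := by
    apply psd_lower hP hs
    intro v
    have h0 := hsing v
    rw [hfac, ← Matrix.mulVec_mulVec, mulVec_norm O hO (P.mulVec v)] at h0
    exact h0
  have hPtlow : ∀ v : Fin n → ℝ, s * ∑ j, (v j) ^ 2 ≤ v ⬝ᵥ Pt.mulVec v := by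
    apply psd_lower hPt hs
    intro v
    have h0 := hsingt v
    rw [hfact, ← Matrix.mulVec_mulVec, mulVec_norm Ot hOt (Pt.mulVec v)] at h0
    exact h0
  obtain ⟨a, ha⟩ : ∃ r, Matrix.trace (Xᵀ * X) = r := ⟨_, rfl⟩
  obtain ⟨b, hb⟩ : ∃ r, Matrix.trace (Eᵀ * E) = r := ⟨_, rfl⟩
  obtain ⟨t, htr⟩ : ∃ r, Matrix.trace (Xᵀ * E) = r := ⟨_, rfl⟩
  have ha0 : 0 ≤ a := by
    rw [← ha, trace_form]
    exact Finset.sum_nonneg fun i _ => Finset.sum_nonneg fun j _ => mul_self_nonneg _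
  have hb0 : 0 ≤ b := by
    rw [← hb, trace_form]
    exact Finset.sum_nonneg fun i _ => Finset.sum_nonneg fun j _ => mul_self_nonneg _
  -- step 1: s * a ≤ t
  have hst : s * a ≤ t := by
    have hid : Matrix.trace (Xᵀ * E)
        = (Matrix.trace (Xᵀ * X * P) + Matrix.trace (Xᵀ * X * Pt)) / 2 := by
      rw [← hX, ← hE, hfac, hfact]
      exact trace_identity O Ot P Pt hO hOt hPs hPts
    have l1 := trace_lower X P hPlow
    have l2 := trace_lower X Pt hPtlow
    rw [ha] at l1 l2
    rw [← htr, hid]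
    linarith
  -- step 2: Cauchy–Schwarz, t^2 ≤ a * b
  have hcs : t ^ 2 ≤ a * b := by
    rw [← htr, ← ha, ← hb, trace_form, trace_form, trace_form]
    have e1 := (Fintype.sum_prod_type
      (fun p : Fin m × Fin n => X p.1 p.2 * E p.1 p.2)).symm
    have e2 := (Fintype.sum_prod_type
      (fun p : Fin m × Fin n => X p.1 p.2 * X p.1 p.2)).symm
    have e3 := (Fintype.sum_prod_type
      (fun p : Fin m × Fin n => E p.1 p.2 * E p.1 p.2)).symm
    rw [show (∑ i, ∑ j, X i j * E i j)
        = ∑ p : Fin m × Fin n, X p.1 p.2 * E p.1 p.2 from e1,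
      show (∑ i, ∑ j, X i j * X i j)
        = ∑ p : Fin m × Fin n, X p.1 p.2 * X p.1 p.2 from e2,
      show (∑ i, ∑ j, E i j * E i j)
        = ∑ p : Fin m × Fin n, E p.1 p.2 * E p.1 p.2 from e3]
    have cs := Finset.sum_mul_sq_le_sq_mul_sq Finset.univ
      (fun p : Fin m × Fin n => X p.1 p.2) (fun p : Fin m × Fin n => E p.1 p.2)
    simpa [sq] using cs
  -- step 3: s^2 * a ≤ b
  have key : s ^ 2 * a ≤ b := by
    rcases ha0.eq_or_lt with h | h
    · rw [← h, mul_zero]; exact hb0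
    · have h2 : (s * a) * (s * a) ≤ t * t :=
        mul_self_le_mul_self (mul_nonneg hs.le ha0) hst
      have h3 : (s ^ 2 * a) * a ≤ b * a := by nlinarith [h2, hcs]
      exact le_of_mul_le_mul_right h3 h
  -- step 4: bound b by the quantization error
  have hEsize : b ≤ β ^ 2 * ((m * n : ℕ) : ℝ) * (‖x‖ / 254) ^ 2 := by
    rw [← hb, trace_form]
    have hEentry : ∀ i j, E i j = β * (M i j - Q8mat M i j) := by
      intro i j
      rw [← hE, hM', hMt']
      simp only [Matrix.sub_apply, Matrix.add_apply, Matrix.smul_apply, smul_eq_mul]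
      ring
    calc ∑ i, ∑ j, E i j * E i j
        ≤ ∑ _i : Fin m, ∑ _j : Fin n, β ^ 2 * (‖x‖ / 254) ^ 2 := by
          apply Finset.sum_le_sum; intro i _
          apply Finset.sum_le_sum; intro j _
          rw [hEentry i j]
          have hqm : Q8mat M i j = Q8 x (i, j) := by
            rw [← hx]; rfl
          have hcl := q8_close x (i, j)
          rw [abs_sub_comm] at hcl
          have hq : |M i j - Q8mat M i j| ≤ ‖x‖ / 254 := by
            rw [hqm]
            have hMij : M i j = x (i, j) := by rw [← hx]
            rw [hMij]
            exact hcl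
          have hq2 : (M i j - Q8mat M i j) ^ 2 ≤ (‖x‖ / 254) ^ 2 := by
            rw [← sq_abs]
            exact pow_le_pow_left₀ (abs_nonneg _) hq 2
          nlinarith [sq_nonneg β, sq_nonneg (M i j - Q8mat M i j)]
      _ = β ^ 2 * ((m * n : ℕ) : ℝ) * (‖x‖ / 254) ^ 2 := by
          rw [Finset.sum_const, Finset.sum_const]
          simp [Finset.card_univ]
          ring
  -- the left-hand side equals α^2 * a
  have hLHS : ∑ i, ∑ j, (Wtp i j - Wp i j) ^ 2 = α ^ 2 * a := by
    rw [← ha, trace_form, Finset.mul_sum]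
    apply Finset.sum_congr rfl; intro i _
    rw [Finset.mul_sum]
    apply Finset.sum_congr rfl; intro j _
    rw [hWp, hWtp, ← hX]
    simp only [Matrix.sub_apply, Matrix.smul_apply, smul_eq_mul]
    ring
  rw [hLHS]
  -- final arithmetic
  have hε : (0:ℝ) ≤ ‖x‖ := norm_nonneg _
  have hmn : (0:ℝ) ≤ ((m * n : ℕ) : ℝ) := Nat.cast_nonneg _
  rw [div_mul_eq_mul_div, le_div_iff₀ (by positivity : (0:ℝ) < s ^ 2)]
  have k1 : α ^ 2 * (s ^ 2 * a) ≤ α ^ 2 * b :=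
    mul_le_mul_of_nonneg_left key (sq_nonneg α)
  have k2 : α ^ 2 * b ≤ α ^ 2 * (β ^ 2 * ((m * n : ℕ) : ℝ) * (‖x‖ / 254) ^ 2) :=
    mul_le_mul_of_nonneg_left hEsize (sq_nonneg α)
  have k3 : (0:ℝ) ≤ ((m * n : ℕ) : ℝ) * (α ^ 2 * (β ^ 2 * ‖x‖ ^ 2)) := by positivity
  nlinarith [k1, k2, k3]
end

section
/- (Deterministic core of the Adam lower bound.) Let g ∈ ℝ^d, ε > 0, and g∞ > 256·ε, and suppose ‖g‖∞ ≥ g∞. For every coordinate i satisfying ‖g‖∞/60 < |g_i| < ‖g‖∞/16, the per-coordinate deviation between the unquantized and quantized first Adam step satisfies | g_i/(|g_i| + ε) − Q(g)_i/(√(Q(g²)_i) + ε) | ≥ g∞/(256·ε), where g² is the entrywise square of g and Q(g²) has nonnegative entries so the square root is defined. -/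
section

variable {ι : Type*} [Fintype ι]

theorem pi_norm_fun_sq (x : ι → ℝ) :
    ‖fun j => x j ^ 2‖ = ‖x‖ ^ 2 := by
  apply le_antisymm
  · refine (pi_norm_le_iff_of_nonneg (by positivity)).2 fun j => ?_
    rw [norm_pow]
    exact pow_le_pow_left₀ (norm_nonneg _) (norm_le_pi_norm x j) 2
  · suffices ‖x‖ ≤ √‖fun j => x j ^ 2‖ from
      (Real.le_sqrt (norm_nonneg _) (norm_nonneg _)).1 this
    refine (pi_norm_le_iff_of_nonneg (Real.sqrt_nonneg _)).2 fun j => ?_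
    rw [Real.norm_eq_abs, ← Real.sqrt_sq_eq_abs]
    gcongr
    exact (le_abs_self _).trans (norm_le_pi_norm (fun j => x j ^ 2) j)

theorem abs_Q8_apply_sub_le (x : ι → ℝ) (i : ι) :
    |Q8 x i - x i| ≤ ‖x‖ / 254 := by
  rcases (norm_nonneg x).eq_or_lt with hx | hx
  · have : x i = 0 := norm_le_zero_iff.1 (hx ▸ norm_le_pi_norm x i)
    simp [Q8, ← hx, this]
  · have hQ : Q8 x i - x i = ‖x‖ / 127 * (round (127 * x i / ‖x‖) - 127 * x i / ‖x‖) := by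
      simp only [Q8]; field_simp
    rw [hQ, abs_mul, abs_of_pos (by positivity), abs_sub_comm]
    calc ‖x‖ / 127 * |127 * x i / ‖x‖ - round (127 * x i / ‖x‖)|
        ≤ ‖x‖ / 127 * (1 / 2) := by gcongr; exact abs_sub_round _
      _ = ‖x‖ / 254 := by ring

theorem Q8_apply_eq_zero_of_abs_lt {x : ι → ℝ} {i : ι}
    (h : |x i| < ‖x‖ / 254) : Q8 x i = 0 := by
  have hx : 0 < ‖x‖ := by linarith [abs_nonneg (x i)]
  have : |127 * x i / ‖x‖| < 1 / 2 := by
    rw [abs_div, abs_mul, abs_of_pos hx, div_lt_iff₀ hx]; norm_num; linarith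
  have hround : round (127 * x i / ‖x‖) = 0 := by
    rw [round_eq_zero_iff]; constructor <;> linarith [abs_lt.1 this]
  simp [Q8, hround]

end

theorem abs_div_abs_add_le_one (a : ℝ) {ε : ℝ} (hε : 0 ≤ ε) : |a / (|a| + ε)| ≤ 1 := by
  rw [abs_div, abs_of_nonneg (by positivity : 0 ≤ |a| + ε)]
  exact div_le_one_of_le₀ (by linarith) (by positivity)

/-- **Deterministic core of the Adam lower bound.**  Let `g ∈ ℝ^d`,
`ε > 0`, `g∞ > 256·ε` and `‖g‖∞ ≥ g∞`.  For every coordinate `i` with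
`‖g‖∞/60 < |g_i| < ‖g‖∞/16`, the per-coordinate deviation between the
unquantized and quantized first Adam step satisfies
`|g_i/(|g_i| + ε) − Q(g)_i/(√(Q(g²)_i) + ε)| ≥ g∞/(256·ε)`. -/
theorem adam_quant_coord_deviation {d : ℕ} (g : Fin d → ℝ)
    (ε ginf : ℝ) (hε : 0 < ε) (hginf : 256 * ε < ginf)
    (hg : ginf ≤ ‖g‖) (i : Fin d)
    (hlo : ‖g‖ / 60 < |g i|) (hhi : |g i| < ‖g‖ / 16) :
    ginf / (256 * ε) ≤
      |g i / (|g i| + ε) -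
        Q8 g i / (Real.sqrt (Q8 (fun j => (g j) ^ 2) i) + ε)| := by
  have hg_pos : 0 < ‖g‖ := by linarith
  have hsq_zero : Q8 (fun j => g j ^ 2) i = 0 := by
    apply Q8_apply_eq_zero_of_abs_lt
    rw [pi_norm_fun_sq, abs_of_nonneg (sq_nonneg _), ← sq_abs]
    nlinarith [abs_nonneg (g i)]
  have hQg : ‖g‖ / 60 - ‖g‖ / 254 ≤ |Q8 g i| := by
    linarith [abs_sub_abs_le_abs_sub (g i) (Q8 g i), abs_sub_comm (g i) (Q8 g i),
      abs_Q8_apply_sub_le g i]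
  rw [hsq_zero, Real.sqrt_zero, zero_add, abs_sub_comm]
  calc ginf / (256 * ε) ≤ |Q8 g i| / ε - 1 := by
        rw [div_sub_one hε.ne', div_le_div_iff₀ (by positivity) hε]
        nlinarith
    _ ≤ |Q8 g i / ε| - |g i / (|g i| + ε)| := by
        rw [abs_div, abs_of_pos hε]
        linarith [abs_div_abs_add_le_one (g i) hε.le]
    _ ≤ _ := abs_sub_abs_le_abs_sub _ _
end
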